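/- Gentle measurement lemma: Let {ρ_a}_{a∈A} be a family of density operators, {E_b}_{b∈B} a POVM (E_b ≥ 0, Σ_b E_b = I), φ: A → B a map, and λ > 0 such that 1 − Tr(ρ_a E_{φ(a)}) ≤ λ for all a ∈ A. Then for every a ∈ A, the trace-norm disturbance satisfies ‖ρ_a − Σ_{b∈B} √E_b ρ_a √E_b‖₁ ≤ √(8λ) + λ. -/

import Mathlib

open Matrix BigOperators Kronecker ComplexOrder

noncomputable def negMulLogb (x : ℝ) : ℝ := -(x * Real.logb 2 x)

/-- von Neumann entropy (base 2) of a matrix, via its eigenvalues. -/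
noncomputable def vN {n : Type*} [Fintype n] [DecidableEq n] (ρ : Matrix n n ℂ) : ℝ :=
  if h : ρ.IsHermitian then ∑ i, negMulLogb (h.eigenvalues i) else 0

/-- A density operator: positive semidefinite with unit trace. -/
def IsDensity {n : Type*} [Fintype n] [DecidableEq n] (ρ : Matrix n n ℂ) : Prop :=
  ρ.PosSemidef ∧ ρ.trace = 1

/-- Partial trace over the second tensor factor. -/
noncomputable def ptraceB {A B : Type*} [Fintype B] (ρ : Matrix (A × B) (A × B) ℂ) :
    Matrix A A ℂ :=
  Matrix.of fun a a' => ∑ b, ρ (a, b) (a', b)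

/-- Partial trace over the first tensor factor. -/
noncomputable def ptraceA {A B : Type*} [Fintype A] (ρ : Matrix (A × B) (A × B) ℂ) :
    Matrix B B ℂ :=
  Matrix.of fun b b' => ∑ a, ρ (a, b) (a, b')

/-- Positive square root of a positive semidefinite matrix (junk value 0 otherwise). -/
noncomputable def msqrt {n : Type*} [Fintype n] [DecidableEq n] (M : Matrix n n ℂ) :
    Matrix n n ℂ :=
  by classical exact if h : M.PosSemidef then
    ((h.1.eigenvectorUnitary : Matrix n n ℂ) *
      Matrix.diagonal ((↑) ∘ Real.sqrt ∘ h.1.eigenvalues) *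
      (star h.1.eigenvectorUnitary : Matrix n n ℂ))
    else 0

/-- Trace norm of a matrix. -/
noncomputable def traceNorm {n : Type*} [Fintype n] [DecidableEq n] (X : Matrix n n ℂ) : ℝ :=
  ((msqrt (Xᴴ * X)).trace).re

/-- Outer product |ξ⟩⟨ξ|. -/
noncomputable def outer {n : Type*} (ξ : n → ℂ) : Matrix n n ℂ :=
  Matrix.of fun i j => ξ i * (starRingEnd ℂ) (ξ j)


/-! Write `S = √E_{φ a}`, `D = 1 - S` and `ε = 1 - Tr(ρ E_{φ a})`. Then
`ρ - ∑_b √E_b ρ √E_b = (Dρ + ρD) - DρD - ∑_{b ≠ φ a} √E_b ρ √E_b`, and the trace norm of this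
Hermitian matrix is `Re Tr(C X)` for a Hermitian involution `C` (the sign of `X`). Against `C`,
a positive term contributes at most its trace: `Tr(DρD) ≤ ε`, because `E ≤ √E` when `0 ≤ E ≤ 1`,
and `∑_{b ≠ φ a} Tr(ρ E_b) = ε`. The anticommutator contributes at most `2 √Tr(DρD) ≤ 2 √ε`, by
Cauchy–Schwarz for the semi-inner product `⟪X, Y⟫ = Tr(Y ρ Xᴴ)`. Hence the disturbance is at most
`2 √ε + 2 ε`, which is below `√(8λ) + λ` for `λ ≤ 1/2`; for larger `λ` the trivial bound `2`
suffices. -/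

open scoped MatrixOrder

lemma Matrix.posSemidef_one_sub_of_sum_eq_one {n ι : Type*} [DecidableEq n] [Fintype ι]
    {E : ι → Matrix n n ℂ} (hE : ∀ i, (E i).PosSemidef) (hEsum : ∑ i, E i = 1) (i₀ : ι) :
    (1 - E i₀).PosSemidef := by
  classical
  rw [← hEsum, ← Finset.sum_erase_eq_sub (Finset.mem_univ i₀)]
  exact posSemidef_sum _ fun i _ => hE i

section

variable {n : Type*} [Fintype n]

lemma Matrix.PosSemidef.re_trace_mul_mul_conjTranspose_le {M : Matrix n n ℂ} (hM : M.PosSemidef)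
    (X Y : Matrix n n ℂ) :
    (Y * M * Xᴴ).trace.re ≤ √(X * M * Xᴴ).trace.re * √(Y * M * Yᴴ).trace.re := by
  let := M.toMatrixSeminormedAddCommGroup hM
  let := M.toMatrixInnerProductSpace hM
  have h := re_inner_le_norm (𝕜 := ℂ) X Y
  rwa [norm_eq_sqrt_re_inner (𝕜 := ℂ) X, norm_eq_sqrt_re_inner (𝕜 := ℂ) Y] at h

variable [DecidableEq n]

lemma msqrt_eq_cfcSqrt {M : Matrix n n ℂ} (h : M.PosSemidef) : msqrt M = CFC.sqrt M := by
  rw [CFC.sqrt_eq_cfc, cfc_nnreal_eq_real _ M, h.1.cfc_eq]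
  simp only [msqrt, dif_pos h, IsHermitian.cfc, Unitary.conjStarAlgAut_apply]
  congr 3
  funext i
  simp [Real.coe_sqrt, Real.coe_toNNReal', h.eigenvalues_nonneg i]

lemma traceNorm_eq_re_trace_abs (X : Matrix n n ℂ) : traceNorm X = (CFC.abs X).trace.re := by
  rw [traceNorm, msqrt_eq_cfcSqrt (posSemidef_conjTranspose_mul_self X)]
  rfl

lemma Matrix.IsHermitian.exists_sign_mul_eq_traceNorm {H : Matrix n n ℂ} (hH : H.IsHermitian) :
    ∃ C : Matrix n n ℂ, C.IsHermitian ∧ C * C = 1 ∧ (C * H).trace.re = traceNorm H := by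
  have hsa : IsSelfAdjoint H := hH
  have hcont : ∀ f : ℝ → ℝ, ContinuousOn f (spectrum ℝ H) :=
    fun f => H.finite_real_spectrum.continuousOn f
  let s : ℝ → ℝ := fun x => if 0 ≤ x then 1 else -1
  refine ⟨cfc s H, cfc_predicate s H, ?_, ?_⟩
  · rw [← cfc_mul s s H (hcont s) (hcont s)]
    convert cfc_one ℝ H using 2
    funext x
    by_cases hx : 0 ≤ x <;> simp [s, hx]
  · have habs : cfc s H * H = CFC.abs H := by
      conv_lhs => rhs; rw [← cfc_id ℝ H]
      rw [← cfc_mul s id H (hcont s) (hcont id), CFC.abs_eq_cfc_norm H]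
      refine cfc_congr fun x _ => ?_
      by_cases hx : 0 ≤ x
      · simp [s, hx, abs_of_nonneg hx]
      · simp [s, hx, abs_of_neg (not_le.mp hx)]
    rw [habs, traceNorm_eq_re_trace_abs]

lemma Matrix.PosSemidef.trace_mul_nonneg {A B : Matrix n n ℂ} (hA : A.PosSemidef)
    (hB : B.PosSemidef) : 0 ≤ (A * B).trace := by
  obtain ⟨X, rfl⟩ := CStarAlgebra.nonneg_iff_eq_star_mul_self.mp hA.nonneg
  rw [Matrix.mul_assoc, trace_mul_comm, Matrix.mul_assoc, star_eq_conjTranspose]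
  simpa [Matrix.mul_assoc] using (hB.mul_mul_conjTranspose_same X).trace_nonneg

lemma Matrix.PosSemidef.re_trace_mul_nonneg {A B : Matrix n n ℂ} (hA : A.PosSemidef)
    (hB : B.PosSemidef) : 0 ≤ (A * B).trace.re :=
  (Complex.nonneg_iff.mp (hA.trace_mul_nonneg hB)).1

lemma Matrix.abs_re_trace_mul_le_of_mul_self_eq_one {C P : Matrix n n ℂ} (hC : C.IsHermitian)
    (hCC : C * C = 1) (hP : P.PosSemidef) : |(C * P).trace.re| ≤ P.trace.re := by
  -- `1 ± C = (1 ± C)ᴴ (1 ± C) / 2` is positive semidefinite.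
  have key : ∀ s : ℝ, s * s = 1 → 0 ≤ P.trace.re + s * (C * P).trace.re := by
    intro s hs
    have hsq : (1 + (s : ℂ) • C)ᴴ * (1 + (s : ℂ) • C) = (2 : ℂ) • (1 + (s : ℂ) • C) := by
      simp only [conjTranspose_add, conjTranspose_one, conjTranspose_smul, hC.eq, add_mul,
        mul_add, one_mul, mul_one, smul_mul_smul, hCC, Complex.star_def, Complex.conj_ofReal]
      rw [← Complex.ofReal_mul, hs, Complex.ofReal_one, one_smul]
      module
    have h := (posSemidef_conjTranspose_mul_self (1 + (s : ℂ) • C)).re_trace_mul_nonneg hP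
    rw [hsq] at h
    simp only [add_mul, one_mul, smul_mul_assoc, trace_add, trace_smul, smul_eq_mul,
      Complex.add_re, Complex.mul_re, Complex.re_ofNat, Complex.im_ofNat, Complex.ofReal_re,
      Complex.ofReal_im] at h
    linarith
  rw [abs_le]
  constructor
  · linarith [key 1 (by norm_num)]
  · linarith [key (-1) (by norm_num)]

lemma traceNorm_sub_le {P Q : Matrix n n ℂ} (hP : P.PosSemidef) (hQ : Q.PosSemidef) :
    traceNorm (P - Q) ≤ P.trace.re + Q.trace.re := by
  obtain ⟨C, hC, hCC, hCX⟩ := (hP.isHermitian.sub hQ.isHermitian).exists_sign_mul_eq_traceNorm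
  have hCP := abs_le.mp (abs_re_trace_mul_le_of_mul_self_eq_one hC hCC hP)
  have hCQ := abs_le.mp (abs_re_trace_mul_le_of_mul_self_eq_one hC hCC hQ)
  rw [← hCX, Matrix.mul_sub, trace_sub, Complex.sub_re]
  linarith [hCP.2, hCQ.1]

lemma Matrix.PosSemidef.re_trace_mul_anticommutator_le {ρ C D : Matrix n n ℂ}
    (hρ : ρ.PosSemidef) (hC : C.IsHermitian) (hCC : C * C = 1) (hD : D.IsHermitian) :
    (C * (D * ρ + ρ * D)).trace.re ≤ 2 * √ρ.trace.re * √(D * ρ * D).trace.re := by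
  have hCρC : (C * ρ * C).trace = ρ.trace := by
    rw [trace_mul_cycle, hCC, Matrix.one_mul]
  have h₁ := hρ.re_trace_mul_mul_conjTranspose_le C D
  have h₂ := hρ.re_trace_mul_mul_conjTranspose_le D C
  rw [hC.eq, hD.eq, hCρC] at h₁ h₂
  have hsplit : (C * (D * ρ + ρ * D)).trace = (D * ρ * C).trace + (C * ρ * D).trace := by
    rw [Matrix.mul_add, trace_add, trace_mul_comm C (D * ρ), Matrix.mul_assoc C ρ D]
  rw [hsplit, Complex.add_re]
  linarith

lemma Matrix.PosSemidef.le_cfcSqrt_of_le_one {E : Matrix n n ℂ} (h0 : E.PosSemidef)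
    (h1 : E ≤ 1) : E ≤ CFC.sqrt E := by
  have hE : 0 ≤ E := h0.nonneg
  rw [CFC.sqrt_eq_real_sqrt E, cfcₙ_eq_cfc]
  conv_lhs => rw [← cfc_id ℝ E]
  rw [cfc_le_iff id Real.sqrt E]
  intro x hx
  have hx0 : 0 ≤ x := spectrum_nonneg_of_nonneg hE hx
  have hx1 : x ≤ 1 := (CFC.le_one_iff E).mp h1 x hx
  calc x = √(x * x) := (Real.sqrt_mul_self hx0).symm
    _ ≤ √x := Real.sqrt_le_sqrt (by nlinarith)

lemma Matrix.PosSemidef.cfcSqrt_mul_mul_cfcSqrt {ρ : Matrix n n ℂ} (hρ : ρ.PosSemidef)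
    (E : Matrix n n ℂ) : (CFC.sqrt E * ρ * CFC.sqrt E).PosSemidef := by
  simpa only [(CFC.sqrt_nonneg E).posSemidef.isHermitian.eq] using
    hρ.mul_mul_conjTranspose_same (CFC.sqrt E)

lemma Matrix.trace_sum_cfcSqrt_mul_mul_cfcSqrt {ι : Type*} {E : ι → Matrix n n ℂ}
    (hE : ∀ i, (E i).PosSemidef) (ρ : Matrix n n ℂ) (s : Finset ι) :
    (∑ i ∈ s, CFC.sqrt (E i) * ρ * CFC.sqrt (E i)).trace = (ρ * ∑ i ∈ s, E i).trace := by
  rw [trace_sum, Matrix.mul_sum, trace_sum]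
  refine Finset.sum_congr rfl fun i _ => ?_
  rw [trace_mul_cycle, CFC.sqrt_mul_sqrt_self (E i) (hE i).nonneg, trace_mul_comm]

lemma Matrix.PosSemidef.re_trace_one_sub_cfcSqrt_mul_mul_le {ρ E : Matrix n n ℂ}
    (hρ : ρ.PosSemidef) (hE : E.PosSemidef) (hE1 : E ≤ 1) :
    ((1 - CFC.sqrt E) * ρ * (1 - CFC.sqrt E)).trace.re ≤ (ρ * (1 - E)).trace.re := by
  set S := CFC.sqrt E
  have hgap : 1 - E = (1 - S) * (1 - S) + (2 : ℂ) • (S - E) := by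
    rw [← CFC.sqrt_mul_sqrt_self E hE.nonneg, two_smul]
    noncomm_ring
  have h := hρ.re_trace_mul_nonneg
    ((le_iff.mp (hE.le_cfcSqrt_of_le_one hE1)).smul (by norm_num : (0 : ℂ) ≤ 2))
  rw [hgap, Matrix.mul_add, trace_add, Complex.add_re, trace_mul_cycle, trace_mul_comm ρ]
  linarith

lemma IsDensity.re_trace_mul_one_sub {ρ : Matrix n n ℂ} (hρ : IsDensity ρ)
    (E : Matrix n n ℂ) : (ρ * (1 - E)).trace.re = 1 - (ρ * E).trace.re := by
  rw [Matrix.mul_sub, Matrix.mul_one, trace_sub, Complex.sub_re, hρ.2, Complex.one_re]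

lemma traceNorm_sub_sum_cfcSqrt_mul_mul_le {ι : Type*} [Fintype ι] {ρ : Matrix n n ℂ}
    {E : ι → Matrix n n ℂ} (hρ : IsDensity ρ) (hE : ∀ i, (E i).PosSemidef)
    (hEsum : ∑ i, E i = 1) (i₀ : ι) :
    traceNorm (ρ - ∑ i, CFC.sqrt (E i) * ρ * CFC.sqrt (E i)) ≤
      2 * √(1 - (ρ * E i₀).trace.re) + 2 * (1 - (ρ * E i₀).trace.re) := by
  classical
  have hε := hρ.re_trace_mul_one_sub (E i₀)
  obtain ⟨hρ, hρ1⟩ := hρ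
  set ε := 1 - (ρ * E i₀).trace.re
  set D := 1 - CFC.sqrt (E i₀)
  set R := ∑ i ∈ Finset.univ.erase i₀, CFC.sqrt (E i) * ρ * CFC.sqrt (E i)
  have hD : D.IsHermitian := isHermitian_one.sub (CFC.sqrt_nonneg _).posSemidef.isHermitian
  have hDρD : (D * ρ * D).PosSemidef := by
    simpa only [hD.eq] using hρ.mul_mul_conjTranspose_same D
  have hDρD_tr : (D * ρ * D).trace.re ≤ ε := hε ▸ hρ.re_trace_one_sub_cfcSqrt_mul_mul_le (hE i₀)
    (le_iff.mpr (posSemidef_one_sub_of_sum_eq_one hE hEsum i₀))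
  have hR : R.PosSemidef := posSemidef_sum _ fun i _ => hρ.cfcSqrt_mul_mul_cfcSqrt (E i)
  have hR_tr : R.trace.re = ε := by
    rw [trace_sum_cfcSqrt_mul_mul_cfcSqrt hE, Finset.sum_erase_eq_sub (Finset.mem_univ i₀), hEsum,
      hε]
  have hsplit : ρ - ∑ i, CFC.sqrt (E i) * ρ * CFC.sqrt (E i) = (D * ρ + ρ * D) - D * ρ * D - R := by
    rw [← Finset.add_sum_erase _ _ (Finset.mem_univ i₀)]
    simp only [D, R]
    noncomm_ring
  obtain ⟨C, hC, hCC, hCX⟩ := (hρ.isHermitian.sub (posSemidef_sum _ fun i _ =>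
    hρ.cfcSqrt_mul_mul_cfcSqrt (E i)).isHermitian).exists_sign_mul_eq_traceNorm
  have hcross := hρ.re_trace_mul_anticommutator_le hC hCC hD
  rw [hρ1, Complex.one_re, Real.sqrt_one, mul_one] at hcross
  have hCDρD := abs_le.mp (abs_re_trace_mul_le_of_mul_self_eq_one hC hCC hDρD)
  have hCR := abs_le.mp (abs_re_trace_mul_le_of_mul_self_eq_one hC hCC hR)
  have hsqrt := Real.sqrt_le_sqrt hDρD_tr
  rw [← hCX, hsplit, Matrix.mul_sub, Matrix.mul_sub, trace_sub, trace_sub, Complex.sub_re,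
    Complex.sub_re]
  linarith [hCDρD.1, hCR.1]

end

lemma le_sqrt_eight_mul_add {x ε lam : ℝ} (hε : 0 ≤ ε) (hεlam : ε ≤ lam) (hx₂ : x ≤ 2)
    (hx : x ≤ 2 * √ε + 2 * ε) : x ≤ √(8 * lam) + lam := by
  have hlam : 0 ≤ lam := hε.trans hεlam
  by_cases hsmall : lam ≤ 1 / 2
  · have hε' : √ε ≤ √lam := Real.sqrt_le_sqrt hεlam
    have h8 : √(8 * lam) = 2 * √2 * √lam := by
      rw [Real.sqrt_mul (by norm_num), show (8 : ℝ) = 2 ^ 2 * 2 by norm_num,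
        Real.sqrt_mul (by norm_num), Real.sqrt_sq (by norm_num)]
    have hsl : √lam ^ 2 = lam := Real.sq_sqrt hlam
    have hs2 : √2 ^ 2 = 2 := Real.sq_sqrt (by norm_num)
    have hl : √lam ≤ 3 / 4 := by nlinarith [Real.sqrt_nonneg lam]
    have h2 : 7 / 5 ≤ √2 := by nlinarith [Real.sqrt_nonneg 2]
    rw [h8]
    nlinarith [Real.sqrt_nonneg lam]
  · have h2 : 2 ≤ √(8 * lam) := (Real.le_sqrt (by norm_num) (by positivity)).mpr (by linarith)
    linarith

theorem gentle_measurement_general {n A B : Type*} [Fintype n] [DecidableEq n] [Fintype B]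
    (ρ : A → Matrix n n ℂ) (E : B → Matrix n n ℂ) (φ : A → B) (lam : ℝ)
    (hρ : ∀ a, IsDensity (ρ a))
    (hE : ∀ b, (E b).PosSemidef) (hEsum : ∑ b, E b = 1)
    (hgood : ∀ a, 1 - ((ρ a * E (φ a)).trace).re ≤ lam) :
    ∀ a, traceNorm (ρ a - ∑ b, msqrt (E b) * ρ a * msqrt (E b)) ≤
      Real.sqrt (8 * lam) + lam := by
  intro a
  have hρa := (hρ a).1
  simp only [msqrt_eq_cfcSqrt (hE _)]
  have hε : 0 ≤ 1 - (ρ a * E (φ a)).trace.re := (hρ a).re_trace_mul_one_sub (E (φ a)) ▸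
    hρa.re_trace_mul_nonneg (posSemidef_one_sub_of_sum_eq_one hE hEsum (φ a))
  have hΦ : (∑ b, CFC.sqrt (E b) * ρ a * CFC.sqrt (E b)).PosSemidef :=
    posSemidef_sum _ fun b _ => hρa.cfcSqrt_mul_mul_cfcSqrt (E b)
  refine le_sqrt_eight_mul_add hε (hgood a) ?_
    (traceNorm_sub_sum_cfcSqrt_mul_mul_le (hρ a) hE hEsum (φ a))
  calc _ ≤ (ρ a).trace.re + (∑ b, CFC.sqrt (E b) * ρ a * CFC.sqrt (E b)).trace.re :=
        traceNorm_sub_le hρa hΦ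
    _ = 2 := by rw [trace_sum_cfcSqrt_mul_mul_cfcSqrt hE, hEsum, Matrix.mul_one, (hρ a).2]; norm_num

/-- Gentle measurement lemma. -/
theorem gentle_measurement {n A B : Type*} [Fintype n] [DecidableEq n] [Fintype B]
    (ρ : A → Matrix n n ℂ) (E : B → Matrix n n ℂ) (φ : A → B) (lam : ℝ)
    (hρ : ∀ a, IsDensity (ρ a))
    (hE : ∀ b, (E b).PosSemidef) (hEsum : ∑ b, E b = 1)
    (hlam : 0 < lam)
    (hgood : ∀ a, 1 - ((ρ a * E (φ a)).trace).re ≤ lam) :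
    ∀ a, traceNorm (ρ a - ∑ b, msqrt (E b) * ρ a * msqrt (E b)) ≤
      Real.sqrt (8 * lam) + lam :=
  gentle_measurement_general ρ E φ lam hρ hE hEsum hgood
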